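/- arXiv:1805.00902 — 2 statements merged into one kernel-verified Lean document; each statement's English description precedes it below -/
import Mathlib

section
/- (Gradient of the Green's function.) Let d ≥ 2, λ ∈ (0,1], and let a ∈ ({0} ∪ [λ,1])^{B_d} be an environment whose graph of open edges has a unique infinite cluster C_∞. Set E^a_d := {(x,y) ∈ E_d : x,y ∈ C_∞ and a({x,y}) ≠ 0}. Then there exist a constant C = C(d,λ) < ∞ and a family of functions (G^e)_{e ∈ E^a_d}, G^e : C_∞ → ℝ, such that for every e = (x,y) ∈ E^a_d: (a) sup_{e' ∈ E^a_d} |∇G^e(e')| ≤ C and ⟨∇G^e, ∇G^e⟩_{C_∞} ≤ C; (b) for every h : C_∞ → ℝ with ⟨∇h, ∇h⟩_{C_∞} < ∞, the sum Σ_{(x',y') ∈ E^a_d} ∇G^e(x',y') · a({x',y'}) · ∇h(x',y') converges absolutely and equals ∇h(e) = h(x) − h(y); and (c) for all e, e' ∈ E^a_d: ∇G^e(e') = ∇G^{e'}(e). -/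
open MeasureTheory Filter
open scoped ENNReal Classical

noncomputable section

namespace Perco

/-- Vertices of the lattice `ℤ^d`. -/
abbrev V (d : ℕ) := Fin d → ℤ

/-- Nearest-neighbour adjacency (`ℓ¹`-distance one). -/
def adj {d : ℕ} (x y : V d) : Prop := (∑ i, |x i - y i|) = 1

/-- A bond is an unordered pair of adjacent vertices. -/
def IsBond {d : ℕ} (e : Sym2 (V d)) : Prop := ∃ x y : V d, adj x y ∧ e = s(x, y)

/-- The set of bonds of `ℤ^d`. -/
abbrev Bond (d : ℕ) := {e : Sym2 (V d) // IsBond e}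

/-- An environment assigns a conductance to every bond. -/
abbrev Env (d : ℕ) := Bond d → ℝ

/-- The conductance of the bond `{x, y}` (zero if `x`, `y` are not adjacent). -/
def aOf {d : ℕ} (a : Env d) (x y : V d) : ℝ :=
  if h : adj x y then a ⟨s(x, y), x, y, h, rfl⟩ else 0

/-- The (oriented) edge `(x, y)` is open. -/
def opn {d : ℕ} (a : Env d) (x y : V d) : Prop := adj x y ∧ aOf a x y ≠ 0

/-- Connectivity through open edges. -/
def conn {d : ℕ} (a : Env d) : V d → V d → Prop := Relation.ReflTransGen (opn a)

/-- `C_∞(a)`: the union of all infinite clusters of the environment `a`. -/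
def Cinfty {d : ℕ} (a : Env d) : Set (V d) := {x | {y | conn a x y}.Infinite}

/-- The graph of open edges has a (unique) infinite cluster. -/
def HasUniqueInfiniteCluster {d : ℕ} (a : Env d) : Prop :=
  (Cinfty a).Nonempty ∧ ∀ x ∈ Cinfty a, ∀ y ∈ Cinfty a, conn a x y

/-- The environment takes values in `{0} ∪ [lam, 1]`. -/
def EnvBounds {d : ℕ} (lam : ℝ) (a : Env d) : Prop :=
  ∀ e : Bond d, a e = 0 ∨ a e ∈ Set.Icc lam 1

/-- The discrete gradient of a function defined on the cluster `C`:
`∇u(x,y) = u x - u y` if `x, y ∈ C` and the edge `{x,y}` is open, and `0` otherwise. -/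
def grad {d : ℕ} (a : Env d) (C : Set (V d)) (u : V d → ℝ) (x y : V d) : ℝ :=
  if x ∈ C ∧ y ∈ C ∧ opn a x y then u x - u y else 0

/-- `|F|(x)² = (1/2) ∑_y F(x,y)²` for a vector field `F`. -/
def sqNorm {d : ℕ} (F : V d → V d → ℝ) (x : V d) : ℝ := (1 / 2) * ∑' y, (F x y) ^ 2

/-- `u` is `a`-harmonic at the point `x`. -/
def HarmonicAt {d : ℕ} (a : Env d) (u : V d → ℝ) (x : V d) : Prop :=
  ∑' y, aOf a x y * (u x - u y) = 0

/-- `u` is `a`-harmonic on the set `C`. -/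
def HarmonicOn {d : ℕ} (a : Env d) (C : Set (V d)) (u : V d → ℝ) : Prop :=
  ∀ x ∈ C, HarmonicAt a u x

/-- The closed `ℓ∞` ball of radius `R` in `ℤ^d`. -/
def ballZ (d : ℕ) (R : ℝ) : Set (V d) := {x | ∀ i, (|x i| : ℝ) ≤ R}

/-- The `ℓ∞` distance of two lattice points, as a real number. -/
def distZ {d : ℕ} (x y : V d) : ℝ :=
  (((Finset.univ.sup fun i => (x i - y i).natAbs) : ℕ) : ℝ)

/-- Embedding of `ℤ^d` into `ℝ^d`. -/
def toR {d : ℕ} (x : V d) : Fin d → ℝ := fun i => (x i : ℝ)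

/-- Sum of `f` over the (typically finite) set `S ⊆ ℤ^d`. -/
def setSum {d : ℕ} (S : Set (V d)) (f : V d → ℝ) : ℝ := ∑' x : S, f x.1

/-- Average of `f` over the set `S ⊆ ℤ^d` (zero if `S` is empty or infinite). -/
def setAvg {d : ℕ} (S : Set (V d)) (f : V d → ℝ) : ℝ := (S.ncard : ℝ)⁻¹ * setSum S f

/-- The dilated triadic cube `r□_m = (-r 3^m/2, r 3^m/2)^d ∩ ℤ^d`. -/
def tcube (d : ℕ) (r : ℝ) (m : ℕ) : Set (V d) := {x | ∀ i, 2 * (|x i| : ℝ) < r * 3 ^ m}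

/-- The edge `(x, y)` belongs to `E^a_d`: it is open and both endpoints lie on `C_∞`. -/
def openEdge {d : ℕ} (a : Env d) (x y : V d) : Prop :=
  x ∈ Cinfty a ∧ y ∈ Cinfty a ∧ opn a x y

/-- `u` has finite Dirichlet energy `⟨∇u, ∇u⟩_{C_∞} < ∞`. -/
def FiniteEnergy {d : ℕ} (a : Env d) (u : V d → ℝ) : Prop :=
  Summable (fun pr : V d × V d => (grad a (Cinfty a) u pr.1 pr.2) ^ 2)

/-- The Dirichlet energy `⟨∇u, ∇u⟩_{C_∞}`. -/
def energy {d : ℕ} (a : Env d) (u : V d → ℝ) : ℝ :=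
  ∑' pr : V d × V d, (grad a (Cinfty a) u pr.1 pr.2) ^ 2

/-- `w` is a weak solution of `-∇·(a∇w) = -∇·ξ` on `C_∞`: for every finite-energy `h`,
the pairings `⟨∇w, a∇h⟩_{C_∞}` and `⟨ξ, ∇h⟩_{C_∞}` converge absolutely and coincide. -/
def IsWeakSol {d : ℕ} (a : Env d) (ξ : V d → V d → ℝ) (w : V d → ℝ) : Prop :=
  ∀ h : V d → ℝ, FiniteEnergy a h →
    Summable (fun pr : V d × V d =>
      |grad a (Cinfty a) w pr.1 pr.2 * aOf a pr.1 pr.2 * grad a (Cinfty a) h pr.1 pr.2|) ∧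
    Summable (fun pr : V d × V d => |ξ pr.1 pr.2 * grad a (Cinfty a) h pr.1 pr.2|) ∧
    ∑' pr : V d × V d,
        grad a (Cinfty a) w pr.1 pr.2 * aOf a pr.1 pr.2 * grad a (Cinfty a) h pr.1 pr.2
      = ∑' pr : V d × V d, ξ pr.1 pr.2 * grad a (Cinfty a) h pr.1 pr.2

/-- `G` is a family of Green's functions: for every `e = (x,y) ∈ E^a_d`, the function `G x y`
has bounded gradient, finite Dirichlet energy, and satisfies
`⟨∇G^e, a∇h⟩_{C_∞} = ∇h(e)` (with absolute convergence) for every finite-energy `h`. -/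
def IsGreenFamily {d : ℕ} (a : Env d) (G : V d → V d → V d → ℝ) : Prop :=
  ∀ x y : V d, openEdge a x y →
    (∃ C : ℝ, ∀ x' y' : V d, openEdge a x' y' → |grad a (Cinfty a) (G x y) x' y'| ≤ C) ∧
    FiniteEnergy a (G x y) ∧
    (∀ h : V d → ℝ, FiniteEnergy a h →
      Summable (fun pr : V d × V d =>
        |grad a (Cinfty a) (G x y) pr.1 pr.2 * aOf a pr.1 pr.2 *
          grad a (Cinfty a) h pr.1 pr.2|) ∧
      ∑' pr : V d × V d,
          grad a (Cinfty a) (G x y) pr.1 pr.2 * aOf a pr.1 pr.2 *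
            grad a (Cinfty a) h pr.1 pr.2
        = h x - h y)

/-!
Weight every oriented edge by `√a`, so that finite-energy functions on `C_∞` become vectors
`√a ∇u` of `ℓ²(E_d)`, and let `K` be the subspace of these weighted gradients. Since `C_∞` is
connected, a limit of weighted gradients is again one (integrate along open paths from a base
point), so `K` is closed. For an open edge `e` the vector `v_e = δ_e / √a(e)` represents
`u ↦ ∇u(e)` on `K`, so the orthogonal projection `P v_e = √a ∇G^e` defines `G^e`. Then
`⟨∇G^e, a∇h⟩ = ⟪P v_e, √a ∇h⟫ = ⟪v_e, √a ∇h⟫ = ∇h(e)`, `∇G^e(e') = ⟪v_{e'}, P v_e⟫` is symmetric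
because `P` is self-adjoint, and `‖P v_e‖ ≤ ‖v_e‖ ≤ λ^{-1/2}` bounds both `|∇G^e|` and the energy.
-/

open scoped RealInnerProductSpace Topology

section Conductance

variable {d : ℕ}

lemma adj_symm {x y : V d} (h : adj x y) : adj y x := by
  unfold adj at *
  simpa [abs_sub_comm] using h

lemma aOf_symm (a : Env d) (x y : V d) : aOf a x y = aOf a y x := by
  unfold aOf
  by_cases h : adj x y
  · rw [dif_pos h, dif_pos (adj_symm h)]
    exact congrArg a (Subtype.ext Sym2.eq_swap)
  · rw [dif_neg h, dif_neg (mt adj_symm h)]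

lemma opn_symm (a : Env d) {x y : V d} (h : opn a x y) : opn a y x :=
  ⟨adj_symm h.1, aOf_symm a x y ▸ h.2⟩

lemma conn_symm (a : Env d) {x y : V d} (h : conn a x y) : conn a y x := by
  induction h with
  | refl => exact .refl
  | tail _ hbc ih => exact .head (opn_symm a hbc) ih

lemma mem_Cinfty_of_conn (a : Env d) {x y : V d} (hx : x ∈ Cinfty a) (hxy : conn a x y) :
    y ∈ Cinfty a :=
  hx.mono fun _ hz => (conn_symm a hxy).trans hz

variable {lam : ℝ} {a : Env d}

lemma aOf_nonneg (hlam : 0 ≤ lam) (hb : EnvBounds lam a) (x y : V d) : 0 ≤ aOf a x y := by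
  unfold aOf
  split
  · rcases hb _ with h | h
    · exact h.ge
    · exact hlam.trans h.1
  · rfl

lemma aOf_le_one (hb : EnvBounds lam a) (x y : V d) : aOf a x y ≤ 1 := by
  unfold aOf
  split
  · rcases hb _ with h | h
    · exact h.trans_le zero_le_one
    · exact h.2
  · exact zero_le_one

lemma le_aOf_of_opn (hb : EnvBounds lam a) {x y : V d} (h : opn a x y) : lam ≤ aOf a x y := by
  have hne := h.2
  unfold aOf at hne ⊢
  rw [dif_pos h.1] at hne ⊢
  exact ((hb _).resolve_left hne).1

end Conductance

section WeightedGradient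

variable {d : ℕ}

lemma grad_add (a : Env d) (C : Set (V d)) (u v : V d → ℝ) (x y : V d) :
    grad a C (u + v) x y = grad a C u x y + grad a C v x y := by
  unfold grad; split_ifs <;> simp only [Pi.add_apply, add_zero, sub_add_sub_comm]

lemma grad_smul (a : Env d) (C : Set (V d)) (c : ℝ) (u : V d → ℝ) (x y : V d) :
    grad a C (c • u) x y = c * grad a C u x y := by
  unfold grad; split_ifs <;> simp only [Pi.smul_apply, smul_eq_mul, mul_zero, mul_sub]

abbrev EdgeL2 (d : ℕ) := lp (fun _ : V d × V d => ℝ) 2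

def weightedGrad (a : Env d) (u : V d → ℝ) : V d × V d → ℝ :=
  fun pr => √(aOf a pr.1 pr.2) * grad a (Cinfty a) u pr.1 pr.2

def gradSubspace (a : Env d) : Submodule ℝ (EdgeL2 d) where
  carrier := {F | ∃ u : V d → ℝ, ⇑F = weightedGrad a u}
  zero_mem' := ⟨0, funext fun pr => by simp [weightedGrad, grad]⟩
  add_mem' := by
    rintro F F' ⟨u, hu⟩ ⟨u', hu'⟩
    refine ⟨u + u', funext fun pr => ?_⟩
    simp only [lp.coeFn_add, Pi.add_apply, hu, hu', weightedGrad, grad_add]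
    ring
  smul_mem' := by
    rintro c F ⟨u, hu⟩
    refine ⟨c • u, funext fun pr => ?_⟩
    simp only [lp.coeFn_smul, Pi.smul_apply, hu, weightedGrad, grad_smul, smul_eq_mul]
    ring

variable {lam : ℝ} {a : Env d}

lemma grad_of_openEdge {u : V d → ℝ} {x y : V d} (h : openEdge a x y) :
    grad a (Cinfty a) u x y = u x - u y :=
  if_pos h

lemma grad_of_not_openEdge {u : V d → ℝ} {x y : V d} (h : ¬openEdge a x y) :
    grad a (Cinfty a) u x y = 0 :=
  if_neg h

lemma grad_eq_inv_sqrt_mul_weightedGrad (hlam : 0 ≤ lam) (hb : EnvBounds lam a)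
    (u : V d → ℝ) {x y : V d} (h : openEdge a x y) :
    grad a (Cinfty a) u x y = (√(aOf a x y))⁻¹ * weightedGrad a u (x, y) := by
  have hpos : 0 < aOf a x y := (aOf_nonneg hlam hb x y).lt_of_ne' h.2.2.2
  rw [weightedGrad, inv_mul_cancel_left₀ (Real.sqrt_pos.2 hpos).ne']

lemma sq_grad_le (hlam : 0 < lam) (hb : EnvBounds lam a) (u : V d → ℝ) (pr : V d × V d) :
    grad a (Cinfty a) u pr.1 pr.2 ^ 2 ≤ lam⁻¹ * weightedGrad a u pr ^ 2 := by
  by_cases h : openEdge a pr.1 pr.2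
  · rw [grad_eq_inv_sqrt_mul_weightedGrad hlam.le hb u h, mul_pow, inv_pow,
      Real.sq_sqrt (aOf_nonneg hlam.le hb _ _)]
    exact mul_le_mul_of_nonneg_right (inv_anti₀ hlam (le_aOf_of_opn hb h.2.2)) (sq_nonneg _)
  · rw [grad_of_not_openEdge h, sq, mul_zero]
    positivity

lemma sq_weightedGrad_le (hlam : 0 ≤ lam) (hb : EnvBounds lam a) (u : V d → ℝ)
    (pr : V d × V d) : weightedGrad a u pr ^ 2 ≤ grad a (Cinfty a) u pr.1 pr.2 ^ 2 := by
  rw [weightedGrad, mul_pow, Real.sq_sqrt (aOf_nonneg hlam hb _ _)]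
  exact mul_le_of_le_one_left (sq_nonneg _) (aOf_le_one hb _ _)

lemma memℓp_two_of_summable_sq {ι : Type*} {f : ι → ℝ} (hf : Summable fun i => f i ^ 2) :
    Memℓp f 2 :=
  memℓp_gen <| hf.congr fun i => by
    rw [ENNReal.toReal_ofNat, Real.rpow_two, Real.norm_eq_abs, sq_abs]

lemma memℓp_weightedGrad (hlam : 0 ≤ lam) (hb : EnvBounds lam a) {u : V d → ℝ}
    (hu : FiniteEnergy a u) : Memℓp (weightedGrad a u) 2 :=
  memℓp_two_of_summable_sq <|
    hu.of_nonneg_of_le (fun _ => sq_nonneg _) (sq_weightedGrad_le hlam hb u)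

lemma tsum_sq_eq_norm_sq (F : EdgeL2 d) : ∑' pr, F pr ^ 2 = ‖F‖ ^ 2 := by
  rw [← real_inner_self_eq_norm_sq, lp.inner_eq_tsum]
  exact tsum_congr fun pr => by rw [Real.inner_apply, sq]

lemma energy_le_of_coe_eq_weightedGrad (hlam : 0 < lam) (hb : EnvBounds lam a)
    {u : V d → ℝ} {F : EdgeL2 d} (hF : ⇑F = weightedGrad a u) :
    FiniteEnergy a u ∧ energy a u ≤ lam⁻¹ * ‖F‖ ^ 2 := by
  have hF2 : Summable fun pr => lam⁻¹ * weightedGrad a u pr ^ 2 := by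
    refine Summable.mul_left _ ?_
    refine (lp.summable_inner F F).congr fun pr => ?_
    rw [Real.inner_apply, hF, sq]
  have hfin : FiniteEnergy a u :=
    hF2.of_nonneg_of_le (fun _ => sq_nonneg _) (sq_grad_le hlam hb u)
  refine ⟨hfin, ?_⟩
  calc energy a u ≤ ∑' pr, lam⁻¹ * weightedGrad a u pr ^ 2 :=
        hfin.tsum_le_tsum (sq_grad_le hlam hb u) hF2
    _ = lam⁻¹ * ‖F‖ ^ 2 := by rw [tsum_mul_left, ← hF, tsum_sq_eq_norm_sq]

end WeightedGradient

section Closedness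

variable {d : ℕ} {lam : ℝ} {a : Env d}

lemma exists_tendsto_sub_of_conn {u : ℕ → V d → ℝ}
    (hedge : ∀ x y, openEdge a x y → ∃ L, Tendsto (fun n => u n x - u n y) atTop (𝓝 L))
    {x₀ x : V d} (hx₀ : x₀ ∈ Cinfty a) (hx : conn a x₀ x) :
    ∃ L, Tendsto (fun n => u n x - u n x₀) atTop (𝓝 L) := by
  induction hx with
  | refl => exact ⟨0, by simp⟩
  | @tail y z hy hyz ih =>
    obtain ⟨L, hL⟩ := ih
    have hyC : y ∈ Cinfty a := mem_Cinfty_of_conn a hx₀ hy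
    have hzC : z ∈ Cinfty a := mem_Cinfty_of_conn a hyC (.single hyz)
    obtain ⟨L', hL'⟩ := hedge y z ⟨hyC, hzC, hyz⟩
    exact ⟨L - L', (hL.sub hL').congr fun n => by ring⟩

lemma exists_potential_of_tendsto (hlam : 0 ≤ lam) (hb : EnvBounds lam a)
    (huic : HasUniqueInfiniteCluster a) {u : ℕ → V d → ℝ} {F : V d × V d → ℝ}
    (hF : ∀ pr, Tendsto (fun n => weightedGrad a (u n) pr) atTop (𝓝 (F pr))) :
    ∃ w : V d → ℝ, F = weightedGrad a w := by
  obtain ⟨x₀, hx₀⟩ := huic.1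
  have hedge : ∀ x y, openEdge a x y →
      ∃ L, Tendsto (fun n => u n x - u n y) atTop (𝓝 L) := fun x y h =>
    ⟨_, ((hF (x, y)).const_mul (√(aOf a x y))⁻¹).congr fun n => by
      rw [← grad_eq_inv_sqrt_mul_weightedGrad hlam hb _ h, grad_of_openEdge h]⟩
  have hpot : ∀ x, ∃ L, x ∈ Cinfty a → Tendsto (fun n => u n x - u n x₀) atTop (𝓝 L) := by
    intro x
    by_cases hx : x ∈ Cinfty a
    · obtain ⟨L, hL⟩ := exists_tendsto_sub_of_conn hedge hx₀ (huic.2 x₀ hx₀ x hx)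
      exact ⟨L, fun _ => hL⟩
    · exact ⟨0, fun h => absurd h hx⟩
  choose w hw using hpot
  refine ⟨w, funext fun pr => tendsto_nhds_unique (hF pr) ?_⟩
  by_cases h : openEdge a pr.1 pr.2
  · have hlim := ((hw pr.1 h.1).sub (hw pr.2 h.2.1)).const_mul (√(aOf a pr.1 pr.2))
    rw [weightedGrad, grad_of_openEdge h]
    refine hlim.congr fun n => ?_
    simp only [weightedGrad, grad_of_openEdge h]
    ring
  · simp only [weightedGrad, grad_of_not_openEdge h, mul_zero]
    exact tendsto_const_nhds

lemma isClosed_gradSubspace (hlam : 0 ≤ lam) (hb : EnvBounds lam a)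
    (huic : HasUniqueInfiniteCluster a) : IsClosed (gradSubspace a : Set (EdgeL2 d)) := by
  refine IsSeqClosed.isClosed fun Fs F hFs hlim => ?_
  choose u hu using hFs
  have hcoe := tendsto_pi_nhds.1 ((lp.uniformContinuous_coe.continuous.tendsto F).comp hlim)
  exact exists_potential_of_tendsto (u := u) hlam hb huic fun pr =>
    (hcoe pr).congr fun n => congrFun (hu n) pr

end Closedness

section Green

variable {d : ℕ} {lam : ℝ} {a : Env d}

variable (a) in
def edgeVec (x y : V d) : EdgeL2 d := lp.single 2 (x, y) (√(aOf a x y))⁻¹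

lemma inner_edgeVec (x y : V d) (F : EdgeL2 d) :
    ⟪edgeVec a x y, F⟫ = (√(aOf a x y))⁻¹ * F (x, y) := by
  rw [edgeVec, lp.inner_single_left, Real.inner_apply]

lemma norm_edgeVec_le (hlam : 0 < lam) (hb : EnvBounds lam a) {x y : V d} (h : opn a x y) :
    ‖edgeVec a x y‖ ≤ (√lam)⁻¹ := by
  rw [edgeVec, lp.norm_single (by norm_num), Real.norm_eq_abs, abs_of_nonneg (by positivity)]
  exact inv_anti₀ (Real.sqrt_pos.2 hlam) (Real.sqrt_le_sqrt (le_aOf_of_opn hb h))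

lemma grad_eq_inner_edgeVec (hlam : 0 ≤ lam) (hb : EnvBounds lam a) {u : V d → ℝ}
    {F : EdgeL2 d} (hF : ⇑F = weightedGrad a u) {x y : V d} (h : openEdge a x y) :
    grad a (Cinfty a) u x y = ⟪edgeVec a x y, F⟫ := by
  rw [inner_edgeVec, hF, grad_eq_inv_sqrt_mul_weightedGrad hlam hb u h]

variable [(gradSubspace a).HasOrthogonalProjection]

variable (a) in
/-- The Green's function `G^e` of the open edge `e = (x, y)`. -/
def green (x y : V d) : V d → ℝ :=
  ((gradSubspace a).starProjection_apply_mem (edgeVec a x y)).choose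

lemma coe_starProjection_edgeVec (x y : V d) :
    ⇑((gradSubspace a).starProjection (edgeVec a x y)) = weightedGrad a (green a x y) :=
  ((gradSubspace a).starProjection_apply_mem (edgeVec a x y)).choose_spec

lemma grad_green_eq_inner (hlam : 0 ≤ lam) (hb : EnvBounds lam a) (x y : V d) {x' y' : V d}
    (h' : openEdge a x' y') :
    grad a (Cinfty a) (green a x y) x' y' =
      ⟪edgeVec a x' y', (gradSubspace a).starProjection (edgeVec a x y)⟫ :=
  grad_eq_inner_edgeVec hlam hb (coe_starProjection_edgeVec x y) h'

lemma grad_green_symm (hlam : 0 ≤ lam) (hb : EnvBounds lam a) {x y x' y' : V d}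
    (h : openEdge a x y) (h' : openEdge a x' y') :
    grad a (Cinfty a) (green a x y) x' y' = grad a (Cinfty a) (green a x' y') x y := by
  rw [grad_green_eq_inner hlam hb x y h', grad_green_eq_inner hlam hb x' y' h,
    ← Submodule.inner_starProjection_left_eq_right, real_inner_comm]

lemma abs_grad_green_le (hlam : 0 < lam) (hb : EnvBounds lam a) {x y x' y' : V d}
    (h : openEdge a x y) (h' : openEdge a x' y') :
    |grad a (Cinfty a) (green a x y) x' y'| ≤ lam⁻¹ := by
  rw [grad_green_eq_inner hlam.le hb x y h']
  calc _ ≤ ‖edgeVec a x' y'‖ * ‖(gradSubspace a).starProjection (edgeVec a x y)‖ :=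
        abs_real_inner_le_norm _ _
    _ ≤ (√lam)⁻¹ * (√lam)⁻¹ := by
        gcongr
        · exact norm_edgeVec_le hlam hb h'.2.2
        · exact ((gradSubspace a).norm_starProjection_apply_le _).trans
            (norm_edgeVec_le hlam hb h.2.2)
    _ = lam⁻¹ := by rw [← mul_inv, Real.mul_self_sqrt hlam.le]

lemma energy_green_le (hlam : 0 < lam) (hb : EnvBounds lam a) {x y : V d}
    (h : openEdge a x y) :
    FiniteEnergy a (green a x y) ∧ energy a (green a x y) ≤ lam⁻¹ * lam⁻¹ := by
  obtain ⟨hfin, hle⟩ := energy_le_of_coe_eq_weightedGrad hlam hb (coe_starProjection_edgeVec x y)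
  refine ⟨hfin, hle.trans (mul_le_mul_of_nonneg_left ?_ (by positivity))⟩
  calc _ ≤ ‖edgeVec a x y‖ ^ 2 := by
        gcongr; exact (gradSubspace a).norm_starProjection_apply_le _
    _ ≤ (√lam)⁻¹ ^ 2 := by gcongr; exact norm_edgeVec_le hlam hb h.2.2
    _ = lam⁻¹ := by rw [inv_pow, Real.sq_sqrt hlam.le]

lemma green_weak_solution (hlam : 0 ≤ lam) (hb : EnvBounds lam a) {x y : V d}
    (h : openEdge a x y) {u : V d → ℝ} (hu : FiniteEnergy a u) :
    Summable (fun pr : V d × V d =>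
      |grad a (Cinfty a) (green a x y) pr.1 pr.2 * aOf a pr.1 pr.2 *
        grad a (Cinfty a) u pr.1 pr.2|) ∧
    ∑' pr : V d × V d,
        grad a (Cinfty a) (green a x y) pr.1 pr.2 * aOf a pr.1 pr.2 *
          grad a (Cinfty a) u pr.1 pr.2
      = u x - u y := by
  set P := (gradSubspace a).starProjection (edgeVec a x y)
  let W : EdgeL2 d := ⟨weightedGrad a u, memℓp_weightedGrad hlam hb hu⟩
  have hpair : ∀ pr : V d × V d,
      grad a (Cinfty a) (green a x y) pr.1 pr.2 * aOf a pr.1 pr.2 *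
        grad a (Cinfty a) u pr.1 pr.2 = ⟪P pr, W pr⟫ := fun pr => by
    rw [Real.inner_apply, coe_starProjection_edgeVec]
    simp only [W, weightedGrad]
    rw [mul_mul_mul_comm, Real.mul_self_sqrt (aOf_nonneg hlam hb pr.1 pr.2)]
    ring
  have hsum : Summable fun pr => ⟪P pr, W pr⟫ := lp.summable_inner P W
  simp only [hpair]
  refine ⟨summable_abs_iff.2 hsum, ?_⟩
  have hW : W ∈ gradSubspace a := ⟨u, rfl⟩
  rw [← lp.inner_eq_tsum, Submodule.inner_starProjection_left_eq_right,
    Submodule.starProjection_eq_self_iff.2 hW,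
    ← grad_eq_inner_edgeVec hlam hb rfl h, grad_of_openEdge h]

end Green

theorem statement4_general (d : ℕ) (lam : ℝ) (hlam0 : 0 < lam) :
    ∃ C : ℝ, 0 < C ∧
      ∀ a : Env d, EnvBounds lam a → HasUniqueInfiniteCluster a →
        ∃ G : V d → V d → V d → ℝ,
          ∀ x y : V d, openEdge a x y →
            (∀ x' y' : V d, openEdge a x' y' → |grad a (Cinfty a) (G x y) x' y'| ≤ C) ∧
            (FiniteEnergy a (G x y) ∧ energy a (G x y) ≤ C) ∧
            (∀ h : V d → ℝ, FiniteEnergy a h →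
              Summable (fun pr : V d × V d =>
                |grad a (Cinfty a) (G x y) pr.1 pr.2 * aOf a pr.1 pr.2 *
                  grad a (Cinfty a) h pr.1 pr.2|) ∧
              ∑' pr : V d × V d,
                  grad a (Cinfty a) (G x y) pr.1 pr.2 * aOf a pr.1 pr.2 *
                    grad a (Cinfty a) h pr.1 pr.2
                = h x - h y) ∧
            (∀ x' y' : V d, openEdge a x' y' →
              grad a (Cinfty a) (G x y) x' y' = grad a (Cinfty a) (G x' y') x y) := by
  refine ⟨lam⁻¹ * lam⁻¹ + lam⁻¹, by positivity, fun a hb huic => ?_⟩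
  have : CompleteSpace (gradSubspace a) :=
    (isClosed_gradSubspace hlam0.le hb huic).completeSpace_coe
  refine ⟨green a, fun x y hxy => ⟨fun x' y' h' => ?_, ?_,
    fun h hh => green_weak_solution hlam0.le hb hxy hh,
    fun x' y' h' => grad_green_symm hlam0.le hb hxy h'⟩⟩
  · exact (abs_grad_green_le hlam0 hb hxy h').trans (le_add_of_nonneg_left (by positivity))
  · obtain ⟨hfin, hle⟩ := energy_green_le hlam0 hb hxy
    exact ⟨hfin, hle.trans (le_add_of_nonneg_right (by positivity))⟩

/-- Gradient of the Green's function.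
There exist `C = C(d, λ)` and a family `(G^e)_{e ∈ E^a_d}` such that every `G^e` has gradient
bounded by `C` and Dirichlet energy at most `C`, solves `-∇·(a∇G^e) = δ_x - δ_y` weakly, and
the symmetry `∇G^e(e') = ∇G^{e'}(e)` holds. -/
theorem statement4 (d : ℕ) (hd : 2 ≤ d) (lam : ℝ) (hlam0 : 0 < lam) (hlam1 : lam ≤ 1) :
    ∃ C : ℝ, 0 < C ∧
      ∀ a : Env d, EnvBounds lam a → HasUniqueInfiniteCluster a →
        ∃ G : V d → V d → V d → ℝ,
          ∀ x y : V d, openEdge a x y →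
            (∀ x' y' : V d, openEdge a x' y' → |grad a (Cinfty a) (G x y) x' y'| ≤ C) ∧
            (FiniteEnergy a (G x y) ∧ energy a (G x y) ≤ C) ∧
            (∀ h : V d → ℝ, FiniteEnergy a h →
              Summable (fun pr : V d × V d =>
                |grad a (Cinfty a) (G x y) pr.1 pr.2 * aOf a pr.1 pr.2 *
                  grad a (Cinfty a) h pr.1 pr.2|) ∧
              ∑' pr : V d × V d,
                  grad a (Cinfty a) (G x y) pr.1 pr.2 * aOf a pr.1 pr.2 *
                    grad a (Cinfty a) h pr.1 pr.2
                = h x - h y) ∧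
            (∀ x' y' : V d, openEdge a x' y' →
              grad a (Cinfty a) (G x y) x' y' = grad a (Cinfty a) (G x' y') x y) :=
  statement4_general d lam hlam0

end Perco
end
end

section
/- (Appendix A, Step 1: mollification error in the dual Sobolev norm.) Let d ≥ 1 and q ∈ [2, ∞). Let ψ ∈ C_c^∞(B_{1/4}) with ∫_{ℝ^d} ψ = 1. Then there exists a constant C = C(d, ψ) < ∞ such that for every continuously differentiable function u defined on an open neighborhood of the closed ball B̄_1: ‖u − ψ ∗ u‖_{W^{−1,q}(B_{3/4})} ≤ C ‖∇u‖_{W^{−1,q}(B_1)}, where (ψ ∗ u)(x) := ∫_{B_{1/4}} ψ(s) u(x − s) ds for x ∈ B_{3/4}. -/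
open MeasureTheory

noncomputable section

namespace DualSobolev

variable {d : ℕ}

/-- The gradient of `g : ℝ^d → ℝ` as a vector field. -/
def gradVec (g : (Fin d → ℝ) → ℝ) (x : Fin d → ℝ) : Fin d → ℝ :=
  fun i => fderiv ℝ g x (Pi.single i 1)

/-- A scalar test function for the `W^{-1,q}(B)` norm: a smooth compactly supported function
`g` with support in `B` and `‖g‖_{L^p(B)} + ‖∇g‖_{L^p(B)} ≤ 1`. -/
def TestFun (B : Set (Fin d → ℝ)) (p : ℝ) (g : (Fin d → ℝ) → ℝ) : Prop :=
  (∀ n : ℕ, ContDiff ℝ n g) ∧ HasCompactSupport g ∧ tsupport g ⊆ B ∧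
    (∫ x in B, |g x| ^ p) ^ (1 / p) + (∫ x in B, ‖fderiv ℝ g x‖ ^ p) ^ (1 / p) ≤ 1

/-- The `W^{-1,q}(B)` norm of a scalar function, by duality with `W^{1,p}_0(B)`,
`p = q/(q-1)`. -/
def dualNorm (q : ℝ) (B : Set (Fin d → ℝ)) (f : (Fin d → ℝ) → ℝ) : ℝ :=
  sSup {t : ℝ | ∃ g, TestFun B (q / (q - 1)) g ∧ t = ∫ x in B, f x * g x}

/-- A vector-valued test function for the `W^{-1,q}(B)` norm of vector fields. -/
def TestVF (B : Set (Fin d → ℝ)) (p : ℝ) (g : (Fin d → ℝ) → Fin d → ℝ) : Prop :=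
  (∀ n : ℕ, ContDiff ℝ n g) ∧ HasCompactSupport g ∧ tsupport g ⊆ B ∧
    (∫ x in B, ‖g x‖ ^ p) ^ (1 / p) + (∫ x in B, ‖fderiv ℝ g x‖ ^ p) ^ (1 / p) ≤ 1

/-- The `W^{-1,q}(B)` norm of a vector field, by duality. -/
def dualNormVF (q : ℝ) (B : Set (Fin d → ℝ)) (F : (Fin d → ℝ) → Fin d → ℝ) : ℝ :=
  sSup {t : ℝ | ∃ g, TestVF B (q / (q - 1)) g ∧ t = ∫ x in B, ∑ i, F x i * g x i}

/-- `u` is continuously differentiable on an open neighbourhood of the closed unit ball. -/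
def C1NearClosedUnitBall (u : (Fin d → ℝ) → ℝ) : Prop :=
  ∃ U : Set (Fin d → ℝ), IsOpen U ∧ Metric.closedBall 0 1 ⊆ U ∧ ContDiffOn ℝ 1 u U

end DualSobolev

/-! Cut `u` off to a globally `C¹` function `v` that agrees with it on the closed unit ball.
Since `∫ ψ = 1`, `v - ψ ∗ v = ∫ ψ(s) (v - v(· - s)) ds`, and
`v(x) - v(x - s) = ∫₀¹ Dv(x - τs) s dτ`.
Pair with a test function `g` supported in `B_{3/4}` and substitute `x = y + τs`: each `(s, τ)`
contributes `|s|` times the pairing of `∇v = ∇u` on `B_1` with the vector test field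
`y ↦ g(y + τs) s/|s|`, which is at most `|s| ‖∇u‖_{W^{-1,q}(B_1)}`. Integrating against `|ψ(s)|`
with `|s| < 1/4` gives the constant `(1/4) ∫ |ψ|`. -/

open Metric Set Filter
open scoped Topology

theorem ContDiffOn.exists_contDiff_eqOn_closedBall {E : Type*} [NormedAddCommGroup E]
    [NormedSpace ℝ E] [HasContDiffBump E] [ProperSpace E] {n : ℕ∞} {u : E → ℝ}
    {U : Set E} {c : E} {r : ℝ} (hu : ContDiffOn ℝ n u U) (hU : IsOpen U) (hr : 0 < r)
    (hrU : closedBall c r ⊆ U) :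
    ∃ v : E → ℝ, ContDiff ℝ n v ∧ EqOn v u (closedBall c r) := by
  obtain ⟨δ, hδ, hδU⟩ := (isCompact_closedBall c r).exists_cthickening_subset_open hU hrU
  rw [cthickening_closedBall hδ.le hr.le] at hδU
  let χ : ContDiffBump c := ⟨r, δ + r, hr, by linarith⟩
  refine ⟨fun x => χ x * u x, contDiff_iff_contDiffAt.2 fun x => ?_,
    fun x hx => by simp [χ.one_of_mem_closedBall hx]⟩
  by_cases hx : x ∈ U
  · exact χ.contDiffAt.mul (hu.contDiffAt (hU.mem_nhds hx))
  · have hχx : χ =ᶠ[𝓝 x] 0 := notMem_tsupport_iff_eventuallyEq.1 fun h =>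
      hx (hδU (χ.tsupport_eq ▸ h))
    refine contDiffAt_const (c := 0).congr_of_eventuallyEq (hχx.mono fun y hy => ?_)
    simp_all

theorem Continuous.integrableOn_ball {E F : Type*} [NormedAddCommGroup E] [MeasurableSpace E]
    [OpensMeasurableSpace E] [ProperSpace E] [NormedAddCommGroup F] {μ : Measure E}
    [IsFiniteMeasureOnCompacts μ] {f : E → F} (hf : Continuous f) (c : E) (r : ℝ) :
    IntegrableOn f (ball c r) μ :=
  (hf.continuousOn.integrableOn_compact (isCompact_closedBall c r)).mono_set ball_subset_closedBall

theorem Continuous.integrable_norm_rpow_of_hasCompactSupport {X E : Type*} [TopologicalSpace X]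
    [MeasurableSpace X] [OpensMeasurableSpace X] {μ : Measure X} [IsFiniteMeasureOnCompacts μ]
    [NormedAddCommGroup E] {f : X → E} (hf : Continuous f) (hfc : HasCompactSupport f) {p : ℝ}
    (hp : 0 < p) : Integrable (fun x => ‖f x‖ ^ p) μ :=
  (hf.norm.rpow_const fun _ => Or.inr hp.le).integrable_of_hasCompactSupport
    (hfc.comp_left (g := fun w : E => ‖w‖ ^ p) (by simp [hp.ne']))

theorem sub_sub_eq_integral_fderiv {E F : Type*} [NormedAddCommGroup E] [NormedSpace ℝ E]
    [NormedAddCommGroup F] [NormedSpace ℝ F] [CompleteSpace F] {v : E → F}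
    (hv : ContDiff ℝ 1 v) (x w : E) :
    v x - v (x - w) = ∫ τ in (0 : ℝ)..1, fderiv ℝ v (x - τ • w) w := by
  have hline : ∀ τ : ℝ, HasDerivAt (fun τ : ℝ => v (x - τ • w)) (-fderiv ℝ v (x - τ • w) w) τ :=
    fun τ => by
      have := ((hv.differentiable one_ne_zero) _).hasFDerivAt.comp_hasDerivAt τ
        (((hasDerivAt_id τ).smul_const w).const_sub x)
      simpa [Function.comp_def] using this
  have hcont : Continuous fun τ : ℝ => fderiv ℝ v (x - τ • w) w :=
    ((hv.continuous_fderiv one_ne_zero).comp (by fun_prop)).clm_apply continuous_const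
  rw [← neg_neg (∫ τ in (0 : ℝ)..1, _), ← intervalIntegral.integral_neg,
    intervalIntegral.integral_eq_sub_of_hasDerivAt (fun τ _ => hline τ)
    (hcont.neg.intervalIntegrable 0 1)]
  simp

theorem integrable_prod_restrict_of_continuous {X Y E : Type*} [MeasureSpace X] [MeasureSpace Y]
    [TopologicalSpace X] [TopologicalSpace Y] [OpensMeasurableSpace X] [OpensMeasurableSpace Y]
    [T2Space X] [T2Space Y] [SecondCountableTopology X] [SecondCountableTopology Y]
    [IsFiniteMeasureOnCompacts (volume : Measure X)]
    [IsFiniteMeasureOnCompacts (volume : Measure Y)] [SFinite (volume : Measure X)]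
    [SFinite (volume : Measure Y)] [NormedAddCommGroup E] {f : X × Y → E} (hf : Continuous f)
    {s : Set X} {t : Set Y} (hs : IsCompact (closure s)) (ht : IsCompact (closure t)) :
    Integrable f ((volume.restrict s).prod (volume.restrict t)) := by
  rw [Measure.prod_restrict]
  exact (hf.continuousOn.integrableOn_compact (hs.prod ht)).mono_set
    (prod_mono subset_closure subset_closure)

theorem setIntegral_comp_add_right_le {G : Type*} [AddGroup G] [MeasurableSpace G]
    [MeasurableAdd G] {μ : Measure G} [μ.IsAddRightInvariant] {F : G → ℝ} (hF : Integrable F μ)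
    (hF0 : 0 ≤ F) {A : Set G} (hFA : ∀ x ∉ A, F x = 0) (B : Set G) (a : G) :
    ∫ y in B, F (y + a) ∂μ ≤ ∫ x in A, F x ∂μ := calc
  ∫ y in B, F (y + a) ∂μ ≤ ∫ y, F (y + a) ∂μ :=
    setIntegral_le_integral (hF.comp_add_right a) (Eventually.of_forall fun y => hF0 (y + a))
  _ = ∫ x in A, F x ∂μ := by
    rw [integral_add_right_eq_self, setIntegral_eq_integral_of_forall_compl_eq_zero hFA]

namespace DualSobolev

variable {d : ℕ}

lemma sum_gradVec_mul (g : (Fin d → ℝ) → ℝ) (x w : Fin d → ℝ) :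
    ∑ i, gradVec g x i * w i = fderiv ℝ g x w := by
  conv_rhs => rw [← Finset.univ_sum_single w]
  simp only [map_sum, gradVec]
  refine Finset.sum_congr rfl fun i _ => ?_
  rw [show Pi.single i (w i) = w i • (Pi.single i 1 : Fin d → ℝ) by
    rw [← Pi.single_smul, smul_eq_mul, mul_one], map_smul, smul_eq_mul,
    mul_comm]

lemma gradVec_eqOn {f g : (Fin d → ℝ) → ℝ} {s : Set (Fin d → ℝ)} (hs : IsOpen s)
    (h : EqOn f g s) : EqOn (gradVec f) (gradVec g) s := fun x hx => by
  have hfg : f =ᶠ[𝓝 x] g := (hs.eventually_mem hx).mono h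
  unfold gradVec
  rw [hfg.fderiv_eq]

lemma norm_gradVec_le (g : (Fin d → ℝ) → ℝ) (x : Fin d → ℝ) :
    ‖gradVec g x‖ ≤ ‖fderiv ℝ g x‖ :=
  pi_norm_le_iff_of_nonneg (norm_nonneg _) |>.2 fun i =>
    ((fderiv ℝ g x).le_opNorm _).trans (by rw [Pi.norm_single, norm_one, mul_one])

section TestFunctions

variable {A B : Set (Fin d → ℝ)} {p : ℝ}

lemma setIntegral_norm_rpow_comp_add_right_le {E : Type*} [NormedAddCommGroup E]
    {f : (Fin d → ℝ) → E} (hf : Continuous f) (hfc : HasCompactSupport f) (hp : 0 < p)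
    (hfA : tsupport f ⊆ A) (B : Set (Fin d → ℝ)) (a : Fin d → ℝ) :
    ∫ y in B, ‖f (y + a)‖ ^ p ≤ ∫ x in A, ‖f x‖ ^ p :=
  setIntegral_comp_add_right_le (F := fun x => ‖f x‖ ^ p)
    (hf.integrable_norm_rpow_of_hasCompactSupport hfc hp) (fun _ => by positivity)
    (fun x hx => by simp [image_eq_zero_of_notMem_tsupport fun h => hx (hfA h), hp.ne']) B a

lemma TestFun.comp_add_right {g : (Fin d → ℝ) → ℝ} (hp : 0 < p) (hg : TestFun A p g)
    (a : Fin d → ℝ) (hAB : ∀ y, y + a ∈ A → y ∈ B) : TestFun B p fun y => g (y + a) := by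
  obtain ⟨hsmooth, hcpt, hsupp, hnorm⟩ := hg
  have hval := setIntegral_norm_rpow_comp_add_right_le (hsmooth 0).continuous hcpt hp hsupp B a
  have hder := setIntegral_norm_rpow_comp_add_right_le
    ((hsmooth 1).continuous_fderiv one_ne_zero) (hcpt.fderiv ℝ) hp
    ((tsupport_fderiv_subset ℝ).trans hsupp) B a
  simp only [Real.norm_eq_abs] at hval
  refine ⟨fun n => (hsmooth n).comp (contDiff_id.add contDiff_const),
    hcpt.comp_homeomorph (Homeomorph.addRight a), fun y hy => hAB y (hsupp ?_), ?_⟩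
  · exact (tsupport_comp_eq_preimage g (Homeomorph.addRight a)).subset hy
  · simp only [fderiv_comp_add_right]
    have hp' : 0 ≤ 1 / p := by positivity
    exact (add_le_add (Real.rpow_le_rpow (integral_nonneg fun _ => by positivity) hval hp')
      (Real.rpow_le_rpow (integral_nonneg fun _ => by positivity) hder hp')).trans hnorm

lemma TestFun.smul_const {g : (Fin d → ℝ) → ℝ} (hg : TestFun B p g) {e : Fin d → ℝ}
    (he : ‖e‖ = 1) : TestVF B p fun y => g y • e := by
  obtain ⟨hsmooth, hcpt, hsupp, hnorm⟩ := hg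
  have hdiff : Differentiable ℝ g := (hsmooth 1).differentiable one_ne_zero
  refine ⟨fun n => (hsmooth n).smul contDiff_const, hcpt.smul_right (f' := fun _ => e),
    (tsupport_smul_subset_left g _).trans hsupp, ?_⟩
  simpa [norm_smul, he, fderiv_smul_const (hdiff _)] using hnorm

lemma TestVF.neg {g : (Fin d → ℝ) → Fin d → ℝ} (hg : TestVF B p g) : TestVF B p (-g) := by
  obtain ⟨hsmooth, hcpt, hsupp, hnorm⟩ := hg
  exact ⟨fun n => (hsmooth n).neg, hcpt.neg, (tsupport_neg g).trans_subset hsupp,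
    by simpa [fderiv_neg] using hnorm⟩

lemma testVF_zero (hp : 0 < p) : TestVF B p 0 :=
  ⟨fun _ => contDiff_const, HasCompactSupport.zero, by simp, by simp [hp.ne']⟩

lemma TestVF.setIntegral_norm_rpow_le_one {g : (Fin d → ℝ) → Fin d → ℝ} (hp : 0 < p)
    (hg : TestVF B p g) : ∫ x in B, ‖g x‖ ^ p ≤ 1 := by
  have h := hg.2.2.2
  have hder : 0 ≤ (∫ x in B, ‖fderiv ℝ g x‖ ^ p) ^ (1 / p) := by positivity
  rw [← Real.one_rpow p, ← Real.rpow_inv_le_iff_of_pos (by positivity) zero_le_one hp,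
    ← one_div]
  linarith

end TestFunctions

section DualNorms

variable {q K : ℝ} {B : Set (Fin d → ℝ)} {F : (Fin d → ℝ) → Fin d → ℝ}

lemma le_one_add_rpow {x p : ℝ} (hx : 0 ≤ x) (hp : 1 ≤ p) : x ≤ 1 + x ^ p := by
  rcases le_total x 1 with h | h
  · linarith [Real.rpow_nonneg hx p]
  · linarith [Real.self_le_rpow_of_one_le h hp]

lemma norm_sum_mul_le (F g : Fin d → ℝ) : ‖∑ i, F i * g i‖ ≤ d * (‖F‖ * ‖g‖) := by
  refine (norm_sum_le _ _).trans ?_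
  simpa using Finset.sum_le_card_nsmul Finset.univ _ _ fun i _ => (norm_mul_le (F i) (g i)).trans
    (mul_le_mul (norm_le_pi_norm F i) (norm_le_pi_norm g i) (norm_nonneg _) (norm_nonneg _))

-- Without an upper bound the `sSup` defining `dualNormVF` would be the junk value `0`.
lemma bddAbove_dualNormVF (hq : 1 < q) (hBm : MeasurableSet B) (hB : volume B ≠ ⊤)
    (hF : ∀ x ∈ B, ‖F x‖ ≤ K) :
    BddAbove {t : ℝ | ∃ g, TestVF B (q / (q - 1)) g ∧ t = ∫ x in B, ∑ i, F x i * g x i} := by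
  set p := q / (q - 1)
  have hp : 1 ≤ p := by rw [le_div_iff₀ (by linarith)]; linarith
  have h1 : IntegrableOn (fun _ => (1 : ℝ)) B := integrableOn_const hB
  refine ⟨d * |K| * (volume.real B + 1), ?_⟩
  rintro _ ⟨g, hg, rfl⟩
  have hgp : IntegrableOn (fun x => ‖g x‖ ^ p) B :=
    ((hg.1 0).continuous.integrable_norm_rpow_of_hasCompactSupport hg.2.1
      (by linarith)).integrableOn
  have hpt : ∀ x ∈ B, ‖∑ i, F x i * g x i‖ ≤ d * |K| * (1 + ‖g x‖ ^ p) := fun x hx => calc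
    _ ≤ d * (‖F x‖ * ‖g x‖) := norm_sum_mul_le _ _
    _ ≤ d * (|K| * (1 + ‖g x‖ ^ p)) := by
      gcongr
      exacts [(hF x hx).trans (le_abs_self K), le_one_add_rpow (norm_nonneg _) hp]
    _ = _ := by ring
  calc ∫ x in B, ∑ i, F x i * g x i
      ≤ ∫ x in B, d * |K| * (1 + ‖g x‖ ^ p) :=
        (le_abs_self _).trans (norm_integral_le_of_norm_le
          ((h1.add hgp).const_mul _) ((ae_restrict_iff' hBm).2 (.of_forall hpt)))
    _ ≤ d * |K| * (volume.real B + 1) := by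
      rw [integral_const_mul, integral_add h1 hgp, setIntegral_const,
        smul_eq_mul, mul_one]
      gcongr
      exact hg.setIntegral_norm_rpow_le_one (by linarith)

lemma abs_setIntegral_le_dualNormVF (hq : 1 < q) (hBm : MeasurableSet B) (hB : volume B ≠ ⊤)
    (hF : ∀ x ∈ B, ‖F x‖ ≤ K) {g : (Fin d → ℝ) → Fin d → ℝ} (hg : TestVF B (q / (q - 1)) g) :
    |∫ x in B, ∑ i, F x i * g x i| ≤ dualNormVF q B F := by
  have hbdd := bddAbove_dualNormVF hq hBm hB hF
  refine abs_le.2 ⟨?_, le_csSup hbdd ⟨g, hg, rfl⟩⟩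
  rw [neg_le, ← integral_neg]
  refine le_csSup hbdd ⟨-g, hg.neg, ?_⟩
  simp [Finset.sum_neg_distrib]

lemma dualNormVF_nonneg (hq : 1 < q) (hBm : MeasurableSet B) (hB : volume B ≠ ⊤)
    (hF : ∀ x ∈ B, ‖F x‖ ≤ K) : 0 ≤ dualNormVF q B F :=
  (abs_nonneg _).trans (abs_setIntegral_le_dualNormVF hq hBm hB hF (testVF_zero (by
    apply div_pos <;> linarith)))

lemma dualNormVF_congr {G : (Fin d → ℝ) → Fin d → ℝ} (hBm : MeasurableSet B) (h : EqOn F G B) :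
    dualNormVF q B F = dualNormVF q B G := by
  have hpair (g : (Fin d → ℝ) → Fin d → ℝ) :
      ∫ x in B, ∑ i, F x i * g x i = ∫ x in B, ∑ i, G x i * g x i :=
    setIntegral_congr_fun hBm fun x hx => by simp only [h hx]
  simp only [dualNormVF, hpair]

lemma dualNorm_congr {f f' : (Fin d → ℝ) → ℝ} (hBm : MeasurableSet B) (h : EqOn f f' B) :
    dualNorm q B f = dualNorm q B f' := by
  have hpair (g : (Fin d → ℝ) → ℝ) : ∫ x in B, f x * g x = ∫ x in B, f' x * g x :=
    setIntegral_congr_fun hBm fun x hx => by simp only [h hx]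
  simp only [dualNorm, hpair]

end DualNorms

section Mollification

variable {v ψ : (Fin d → ℝ) → ℝ} {q r ρ : ℝ}

lemma exists_norm_gradVec_le (hv : ContDiff ℝ 1 v) (c : Fin d → ℝ) (R : ℝ) :
    ∃ K, ∀ x ∈ ball c R, ‖gradVec v x‖ ≤ K :=
  let ⟨K, hK⟩ := (isCompact_closedBall c R).exists_bound_of_continuousOn
    (hv.continuous_fderiv one_ne_zero).continuousOn
  ⟨K, fun x hx => (norm_gradVec_le v x).trans (hK x (ball_subset_closedBall hx))⟩

lemma abs_setIntegral_gradVec_le (hv : ContDiff ℝ 1 v) (hq : 1 < q) {c : Fin d → ℝ} {R : ℝ}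
    {g : (Fin d → ℝ) → Fin d → ℝ} (hg : TestVF (ball c R) (q / (q - 1)) g) :
    |∫ x in ball c R, ∑ i, gradVec v x i * g x i| ≤ dualNormVF q (ball c R) (gradVec v) :=
  let ⟨_, hK⟩ := exists_norm_gradVec_le hv c R
  abs_setIntegral_le_dualNormVF hq measurableSet_ball measure_ball_lt_top.ne hK hg

lemma dualNormVF_gradVec_nonneg (hv : ContDiff ℝ 1 v) (hq : 1 < q) (c : Fin d → ℝ) (R : ℝ) :
    0 ≤ dualNormVF q (ball c R) (gradVec v) :=
  let ⟨_, hK⟩ := exists_norm_gradVec_le hv c R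
  dualNormVF_nonneg hq measurableSet_ball measure_ball_lt_top.ne hK

lemma abs_setIntegral_fderiv_comp_sub_mul_le (hv : ContDiff ℝ 1 v) (hq : 1 < q)
    {g : (Fin d → ℝ) → ℝ} (hg : TestFun (ball 0 r) (q / (q - 1)) g) {a : Fin d → ℝ}
    (ha : ‖a‖ < ρ) (s : Fin d → ℝ) :
    |∫ x in ball 0 r, fderiv ℝ v (x - a) s * g x|
      ≤ ‖s‖ * dualNormVF q (ball 0 (r + ρ)) (gradVec v) := by
  rcases eq_or_ne s 0 with rfl | hs
  · simp
  have hshift : ∀ y, y + a ∈ ball (0 : Fin d → ℝ) r → y ∈ ball 0 (r + ρ) := fun y hy => by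
    rw [mem_ball_zero_iff] at hy ⊢
    calc ‖y‖ = ‖y + a - a‖ := by rw [add_sub_cancel_right]
      _ ≤ ‖y + a‖ + ‖a‖ := norm_sub_le _ _
      _ < r + ρ := add_lt_add hy ha
  have hvanish : ∀ x ∉ ball (0 : Fin d → ℝ) r, g x = 0 := fun x hx =>
    image_eq_zero_of_notMem_tsupport fun h => hx (hg.2.2.1 h)
  set e := ‖s‖⁻¹ • s
  have he : ‖e‖ = 1 := by simp [e, norm_smul, hs]
  have htest : TestVF (ball 0 (r + ρ)) (q / (q - 1)) fun y => g (y + a) • e :=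
    (hg.comp_add_right (div_pos (by linarith) (by linarith)) a hshift).smul_const he
  have hpair : ∫ x in ball 0 r, fderiv ℝ v (x - a) s * g x
      = ‖s‖ * ∫ y in ball 0 (r + ρ), ∑ i, gradVec v y i * (g (y + a) • e) i := calc
    _ = ∫ x, fderiv ℝ v (x - a) s * g x :=
      setIntegral_eq_integral_of_forall_compl_eq_zero fun x hx => by simp [hvanish x hx]
    _ = ∫ y, fderiv ℝ v y s * g (y + a) := by
      rw [← integral_add_right_eq_self _ a]; simp
    _ = ∫ y in ball 0 (r + ρ), fderiv ℝ v y s * g (y + a) :=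
      (setIntegral_eq_integral_of_forall_compl_eq_zero fun y hy => by
        simp [hvanish _ fun h => hy (hshift y h)]).symm
    _ = _ := by
      rw [← integral_const_mul]
      refine integral_congr_ae (.of_forall fun y => ?_)
      simp only [sum_gradVec_mul, map_smul, e, smul_eq_mul]
      field_simp
  rw [hpair, abs_mul, abs_norm]
  exact mul_le_mul_of_nonneg_left (abs_setIntegral_gradVec_le hv hq htest) (norm_nonneg s)

lemma abs_setIntegral_sub_comp_sub_mul_le (hv : ContDiff ℝ 1 v) (hq : 1 < q)
    {g : (Fin d → ℝ) → ℝ} (hg : TestFun (ball 0 r) (q / (q - 1)) g) {s : Fin d → ℝ}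
    (hs : ‖s‖ < ρ) :
    |∫ x in ball 0 r, (v x - v (x - s)) * g x|
      ≤ ‖s‖ * dualNormVF q (ball 0 (r + ρ)) (gradVec v) := by
  have hv' := hv.continuous_fderiv one_ne_zero
  have hg' := (hg.1 0).continuous
  have hswap : ∫ x in ball 0 r, (v x - v (x - s)) * g x
      = ∫ τ in Ioc (0 : ℝ) 1, ∫ x in ball 0 r, fderiv ℝ v (x - τ • s) s * g x := by
    simp_rw [sub_sub_eq_integral_fderiv hv, intervalIntegral.integral_of_le zero_le_one,
      ← integral_mul_const]
    exact integral_integral_swap (integrable_prod_restrict_of_continuous (by fun_prop)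
      isBounded_ball.isCompact_closure (isBounded_Ioc (0 : ℝ) 1).isCompact_closure)
  rw [hswap, ← Real.norm_eq_abs]
  refine (norm_setIntegral_le_of_norm_le_const measure_Ioc_lt_top fun τ hτ =>
    abs_setIntegral_fderiv_comp_sub_mul_le (ρ := ρ) hv hq hg ?_ s).trans (by simp)
  calc ‖τ • s‖ = |τ| * ‖s‖ := by rw [norm_smul, Real.norm_eq_abs]
    _ ≤ 1 * ‖s‖ := by gcongr; exact abs_le.2 ⟨by linarith [hτ.1], hτ.2⟩
    _ < ρ := by rwa [one_mul]

lemma sub_setIntegral_mul_comp_sub (hψ : Continuous ψ) (hψsupp : tsupport ψ ⊆ ball 0 ρ)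
    (hψint : ∫ x, ψ x = 1) (hv : Continuous v) (x : Fin d → ℝ) :
    v x - ∫ t in ball 0 ρ, ψ t * v (x - t) = ∫ t in ball 0 ρ, ψ t * (v x - v (x - t)) := by
  have hψρ : ∫ t in ball 0 ρ, ψ t = 1 := by
    rwa [setIntegral_eq_integral_of_forall_compl_eq_zero fun t ht =>
      image_eq_zero_of_notMem_tsupport fun h => ht (hψsupp h)]
  have hconst : IntegrableOn (fun t => ψ t * v x) (ball 0 ρ) :=
    (hψ.mul continuous_const).integrableOn_ball _ _
  have hshift : IntegrableOn (fun t => ψ t * v (x - t)) (ball 0 ρ) :=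
    (hψ.mul (by fun_prop)).integrableOn_ball _ _
  simp_rw [mul_sub]
  rw [integral_sub hconst hshift, integral_mul_const, hψρ, one_mul]

theorem dualNorm_sub_mollify_le (hψ : Continuous ψ) (hψsupp : tsupport ψ ⊆ ball 0 ρ)
    (hψint : ∫ x, ψ x = 1) (hρ : 0 ≤ ρ) (hv : ContDiff ℝ 1 v) (hq : 1 < q) :
    dualNorm q (ball 0 r) (fun x => v x - ∫ t in ball 0 ρ, ψ t * v (x - t))
      ≤ ρ * (∫ t in ball 0 ρ, |ψ t|) * dualNormVF q (ball 0 (r + ρ)) (gradVec v) := by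
  set N := dualNormVF q (ball 0 (r + ρ)) (gradVec v)
  have hN : 0 ≤ N := dualNormVF_gradVec_nonneg hv hq _ _
  refine Real.sSup_le ?_ (by positivity)
  rintro _ ⟨g, hg, rfl⟩
  have hg' := (hg.1 0).continuous
  have hv' := hv.continuous
  calc ∫ x in ball 0 r, (v x - ∫ t in ball 0 ρ, ψ t * v (x - t)) * g x
      = ∫ x in ball 0 r, ∫ t in ball 0 ρ, ψ t * ((v x - v (x - t)) * g x) := by
        simp_rw [sub_setIntegral_mul_comp_sub hψ hψsupp hψint hv', ← integral_mul_const, mul_assoc]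
    _ = ∫ t in ball 0 ρ, ψ t * ∫ x in ball 0 r, (v x - v (x - t)) * g x := by
        rw [integral_integral_swap (integrable_prod_restrict_of_continuous (by fun_prop)
          isBounded_ball.isCompact_closure isBounded_ball.isCompact_closure)]
        simp_rw [integral_const_mul]
    _ ≤ ∫ t in ball 0 ρ, |ψ t| * (ρ * N) := by
        have hbound : IntegrableOn (fun t => |ψ t| * (ρ * N)) (ball 0 ρ) :=
          (hψ.abs.mul continuous_const).integrableOn_ball _ _
        refine (le_abs_self _).trans ?_
        rw [← Real.norm_eq_abs]
        refine norm_integral_le_of_norm_le hbound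
          ((ae_restrict_iff' measurableSet_ball).2 (.of_forall fun t ht => ?_))
        rw [norm_mul, Real.norm_eq_abs]
        have ht' := mem_ball_zero_iff.1 ht
        gcongr
        exact (abs_setIntegral_sub_comp_sub_mul_le hv hq hg ht').trans (by gcongr)
    _ = ρ * (∫ t in ball 0 ρ, |ψ t|) * N := by rw [integral_mul_const]; ring

end Mollification

theorem statement14_general (d : ℕ) (ψ : (Fin d → ℝ) → ℝ)
    (hψs : ∀ n : ℕ, ContDiff ℝ n ψ)
    (hψsupp : tsupport ψ ⊆ Metric.ball 0 (1 / 4)) (hψint : ∫ x, ψ x = 1) :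
    ∃ C : ℝ, 0 < C ∧
      ∀ q : ℝ, 2 ≤ q →
        ∀ u : (Fin d → ℝ) → ℝ, C1NearClosedUnitBall u →
          dualNorm q (Metric.ball 0 (3 / 4))
              (fun x => u x - ∫ t in Metric.ball (0 : Fin d → ℝ) (1 / 4), ψ t * u (x - t))
            ≤ C * dualNormVF q (Metric.ball 0 1) (gradVec u) := by
  refine ⟨1 / 4 * (∫ t in ball 0 (1 / 4), |ψ t|) + 1, by positivity,
    fun q hq u ⟨U, hU, hUsub, hu⟩ => ?_⟩
  obtain ⟨v, hv, hvu⟩ := hu.exists_contDiff_eqOn_closedBall hU one_pos hUsub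
  have hq : 1 < q := by linarith
  have hgrad := gradVec_eqOn isOpen_ball (hvu.mono ball_subset_closedBall)
  have hmoll : EqOn (fun x => v x - ∫ t in ball 0 (1 / 4), ψ t * v (x - t))
      (fun x => u x - ∫ t in ball 0 (1 / 4), ψ t * u (x - t)) (ball 0 (3 / 4)) := fun x hx => by
    have hx' := mem_ball_zero_iff.1 hx
    refine congr_arg₂ _ (hvu (mem_closedBall_zero_iff.2 (by linarith)))
      (setIntegral_congr_fun measurableSet_ball fun t ht => ?_)
    have ht' := mem_ball_zero_iff.1 ht
    rw [hvu (mem_closedBall_zero_iff.2 ((norm_sub_le x t).trans (by linarith)))]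
  have hN := dualNormVF_gradVec_nonneg hv hq (0 : Fin d → ℝ) 1
  have key := dualNorm_sub_mollify_le (r := 3 / 4) (hψs 0).continuous hψsupp hψint
    (by norm_num) hv hq
  rw [show (3 / 4 : ℝ) + 1 / 4 = 1 by norm_num, dualNorm_congr measurableSet_ball hmoll] at key
  rw [dualNormVF_congr measurableSet_ball hgrad] at key hN
  exact key.trans (mul_le_mul_of_nonneg_right (le_add_of_nonneg_right zero_le_one) hN)

/-- Mollification error in the dual Sobolev norm. For `ψ ∈ C_c^∞(B_{1/4})`
with `∫ψ = 1` there is `C = C(d, ψ)` such that for every `q ∈ [2, ∞)` and every `u` which is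
`C¹` near the closed unit ball, `‖u - ψ∗u‖_{W^{-1,q}(B_{3/4})} ≤ C ‖∇u‖_{W^{-1,q}(B_1)}`. -/
theorem statement14 (d : ℕ) (hd : 1 ≤ d) (ψ : (Fin d → ℝ) → ℝ)
    (hψs : ∀ n : ℕ, ContDiff ℝ n ψ) (hψc : HasCompactSupport ψ)
    (hψsupp : tsupport ψ ⊆ Metric.ball 0 (1 / 4)) (hψint : ∫ x, ψ x = 1) :
    ∃ C : ℝ, 0 < C ∧
      ∀ q : ℝ, 2 ≤ q →
        ∀ u : (Fin d → ℝ) → ℝ, C1NearClosedUnitBall u →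
          dualNorm q (Metric.ball 0 (3 / 4))
              (fun x => u x - ∫ t in Metric.ball (0 : Fin d → ℝ) (1 / 4), ψ t * u (x - t))
            ≤ C * dualNormVF q (Metric.ball 0 1) (gradVec u) :=
  statement14_general d ψ hψs hψsupp hψint

end DualSobolev
end
end
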